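/- arXiv:1608.01986 — 3 statements merged into one kernel-verified Lean document; each statement's English description precedes it below -/
import Mathlib

section
/- For any probability densities p, q on a finite set X and any λ ∈ (0,1], the maximum over p of the relative entropy S(p ‖ λp + (1−λ)q) equals log(1/(λ + (1−λ)·min_{x∈X} q(x))). -/
open scoped BigOperators Classical

/-- A probability mass function on a finite type. -/
def IsPMF {X : Type*} [Fintype X] (p : X → ℝ) : Prop :=
  (∀ x, 0 ≤ p x) ∧ ∑ x, p x = 1

/-- Relative entropy (base 2) of discrete densities, with value `⊤` when
`supp p ⊄ supp q`. -/
noncomputable def relEnt {X : Type*} [Fintype X] (p q : X → ℝ) : EReal :=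
  if ∀ x, 0 < p x → 0 < q x then
    ((∑ x, if 0 < p x then p x * Real.logb 2 (p x / q x) else 0 : ℝ) : EReal)
  else ⊤

/-!
Write `m = min q`. Wherever `p x > 0` we have `q x ≥ m ≥ m · p x`, so the likelihood ratio
`p x / (λ p x + (1-λ) q x)` is at most `1 / (λ + (1-λ) m)`; averaging its logarithm against `p`
bounds the relative entropy by `log₂ (1 / (λ + (1-λ) m))`. The point mass at a minimiser of `q`
has a single ratio, equal to this bound.
-/

section RelEnt

variable {X : Type*} [Fintype X]

theorem IsPMF.le_one {p : X → ℝ} (hp : IsPMF p) (x : X) : p x ≤ 1 :=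
  hp.2 ▸ Finset.single_le_sum (fun y _ => hp.1 y) (Finset.mem_univ x)

theorem isPMF_single (x₀ : X) : IsPMF (Pi.single x₀ (1 : ℝ)) :=
  ⟨fun x => by by_cases h : x = x₀ <;> simp [h], by simp⟩

theorem relEnt_of_pos {p r : X → ℝ} (h : ∀ x, 0 < p x → 0 < r x) :
    relEnt p r = ((∑ x, if 0 < p x then p x * Real.logb 2 (p x / r x) else 0 : ℝ) : EReal) :=
  if_pos h

theorem relEnt_single {r : X → ℝ} (x₀ : X) (hr : 0 < r x₀) :
    relEnt (Pi.single x₀ (1 : ℝ)) r = (Real.logb 2 (1 / r x₀) : EReal) := by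
  have hsupp : ∀ x, 0 < (Pi.single x₀ 1 : X → ℝ) x → 0 < r x := by
    intro x hx
    by_cases h : x = x₀
    · exact h ▸ hr
    · simp [h] at hx
  rw [relEnt_of_pos hsupp, Finset.sum_eq_single_of_mem x₀ (Finset.mem_univ x₀)]
  · simp
  · intro x _ hx
    simp [hx]

theorem relEnt_le_logb_of_div_le {p r : X → ℝ} {c : ℝ} (hp : IsPMF p)
    (hsupp : ∀ x, 0 < p x → 0 < r x) (hratio : ∀ x, 0 < p x → p x / r x ≤ c) :
    relEnt p r ≤ (Real.logb 2 c : EReal) := by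
  rw [relEnt_of_pos hsupp, EReal.coe_le_coe_iff]
  calc (∑ x, if 0 < p x then p x * Real.logb 2 (p x / r x) else 0)
      ≤ ∑ x, p x * Real.logb 2 c := by
        refine Finset.sum_le_sum fun x _ => ?_
        split_ifs with hx
        · exact mul_le_mul_of_nonneg_left
            (Real.logb_le_logb_of_le one_lt_two (div_pos hx (hsupp x hx)) (hratio x hx)) hx.le
        · simp [le_antisymm (not_lt.1 hx) (hp.1 x)]
    _ = Real.logb 2 c := by rw [← Finset.sum_mul, hp.2, one_mul]

end RelEnt

theorem div_mix_le_one_div {lam a b m : ℝ} (hl0 : 0 < lam) (hl1 : lam ≤ 1) (ha0 : 0 < a)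
    (ha1 : a ≤ 1) (hm0 : 0 ≤ m) (hmb : m ≤ b) :
    a / (lam * a + (1 - lam) * b) ≤ 1 / (lam + (1 - lam) * m) := by
  have hl : 0 ≤ 1 - lam := sub_nonneg.2 hl1
  have hmix : 0 < lam * a + (1 - lam) * b := by nlinarith
  rw [div_le_div_iff₀ hmix (by nlinarith), one_mul]
  have hma : m * a ≤ b := by nlinarith
  nlinarith [mul_le_mul_of_nonneg_left hma hl]

/-- For any probability densities `p, q` on a finite set `X` and any `λ ∈ (0,1]`,
the maximum over `p` of `S(p ‖ λp + (1−λ)q)` equals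
`log₂(1/(λ + (1−λ)·min_x q x))`. -/
theorem stmt0 {X : Type*} [Fintype X] [Nonempty X] (q : X → ℝ) (hq : IsPMF q)
    (lam : ℝ) (hl0 : 0 < lam) (hl1 : lam ≤ 1) :
    IsGreatest
      {r : EReal | ∃ p : X → ℝ, IsPMF p ∧
        r = relEnt p (fun x => lam * p x + (1 - lam) * q x)}
      ((Real.logb 2
        (1 / (lam + (1 - lam) * Finset.univ.inf' Finset.univ_nonempty q)) : ℝ) :
        EReal) := by
  obtain ⟨x₀, -, hx₀⟩ := Finset.exists_mem_eq_inf' Finset.univ_nonempty q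
  have hmix_pos : ∀ (p : X → ℝ) x, 0 < p x → 0 < lam * p x + (1 - lam) * q x :=
    fun p x hx => by nlinarith [hq.1 x]
  refine ⟨⟨Pi.single x₀ 1, isPMF_single x₀, ?_⟩, ?_⟩
  · rw [relEnt_single x₀ (hmix_pos _ x₀ (by simp)), hx₀]
    simp
  · rintro _ ⟨p, hp, rfl⟩
    refine relEnt_le_logb_of_div_le hp (hmix_pos p) fun x hx => ?_
    exact div_mix_le_one_div hl0 hl1 hx (hp.le_one x) (hx₀ ▸ hq.1 x₀)
      (Finset.inf'_le q (Finset.mem_univ x))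
end

section
/- For a discrete observable (POVM) M on a product outcome set X×Y with marginals M₁, M₂, and target observables A on X and B on Y, the entropic divergence D(A,B‖M) = sup_ρ [S(A^ρ ‖ M₁^ρ) + S(B^ρ ‖ M₂^ρ)] is finite if and only if ker M₁(x) ⊆ ker A(x) for all x and ker M₂(y) ⊆ ker B(y) for all y. -/
open scoped BigOperators Classical ComplexOrder

/-- A density operator (state) on `ℂⁿ`. -/
def IsState {n : ℕ} (ρ : Matrix (Fin n) (Fin n) ℂ) : Prop :=
  ρ.PosSemidef ∧ ρ.trace = 1

/-- A discrete observable (POVM) with outcomes in the finite set `X`. -/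
def IsPOVM {n : ℕ} {X : Type*} [Fintype X] (A : X → Matrix (Fin n) (Fin n) ℂ) : Prop :=
  (∀ x, (A x).PosSemidef) ∧ ∑ x, A x = 1

/-- Outcome probability density of the observable `A` in the state `ρ`. -/
noncomputable def probOf {n : ℕ} {X : Type*} [Fintype X]
    (A : X → Matrix (Fin n) (Fin n) ℂ) (ρ : Matrix (Fin n) (Fin n) ℂ) :
    X → ℝ := fun x => ((ρ * A x).trace).re

/-! If `ker M₁(x) ⊄ ker A(x)`, the pure state on a vector of the difference has
`A^ρ(x) > 0 = M₁^ρ(x)`, so the divergence is infinite. Conversely, write `A(x) = B⋆B` and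
`M₁(x) = D⋆D`; the kernel inclusion factors `B = C D`, whence `A(x) ≤ c M₁(x)` in the Loewner
order with `c = ‖C‖² + 1`. Then `A^ρ ≤ c M₁^ρ` pointwise for every state `ρ`, which bounds
`S(A^ρ ‖ M₁^ρ)` by `∑ₓ log c(x)` uniformly in `ρ`. -/

open scoped MatrixOrder

namespace Matrix

theorem exists_eq_mul_of_mulVec_eq_zero {𝕜 m n p : Type*} [Field 𝕜] [Fintype n] [Fintype p]
    [DecidableEq n] {B : Matrix m n 𝕜} {D : Matrix p n 𝕜}
    (h : ∀ v, D *ᵥ v = 0 → B *ᵥ v = 0) : ∃ C : Matrix m p 𝕜, B = C * D := by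
  have hrow : ∀ i, ∃ c : p → 𝕜, ∑ j, c j • (LinearMap.proj j ∘ₗ D.mulVecLin) =
      LinearMap.proj i ∘ₗ B.mulVecLin := fun i =>
    (Submodule.mem_span_range_iff_exists_fun 𝕜).1 <| mem_span_of_iInf_ker_le_ker fun v hv => by
      have hDv : D *ᵥ v = 0 := funext fun j => by simpa using (Submodule.mem_iInf _).1 hv j
      simp [h v hDv]
  choose c hc using hrow
  refine ⟨of c, ?_⟩
  ext i k
  simpa [mul_apply, mulVec_single_one] using (LinearMap.congr_fun (hc i) (Pi.single k 1)).symm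

open scoped Matrix.Norms.L2Operator in
theorem PosSemidef.exists_le_smul_of_mulVec_eq_zero {n : Type*} [Fintype n] [DecidableEq n]
    {S T : Matrix n n ℂ} (hS : S.PosSemidef) (hT : T.PosSemidef)
    (h : ∀ v, T *ᵥ v = 0 → S *ᵥ v = 0) : ∃ c : ℝ, 1 ≤ c ∧ S ≤ c • T := by
  obtain ⟨B, rfl⟩ := CStarAlgebra.nonneg_iff_eq_star_mul_self.mp hS.nonneg
  obtain ⟨D, rfl⟩ := CStarAlgebra.nonneg_iff_eq_star_mul_self.mp hT.nonneg
  obtain ⟨C, rfl⟩ := exists_eq_mul_of_mulVec_eq_zero fun v hv =>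
    (conjTranspose_mul_self_mulVec_eq_zero B v).1
      (h v ((conjTranspose_mul_self_mulVec_eq_zero D v).2 hv))
  refine ⟨‖C‖ ^ 2 + 1, le_add_of_nonneg_left (by positivity), ?_⟩
  have hC : star C * C ≤ algebraMap ℝ _ (‖C‖ ^ 2 + 1) :=
    CStarAlgebra.star_mul_le_algebraMap_norm_sq.trans
      (algebraMap_mono _ (le_add_of_nonneg_right zero_le_one))
  calc star (C * D) * (C * D) = star D * (star C * C) * D := by
        simp only [star_mul, mul_assoc]
    _ ≤ star D * algebraMap ℝ _ (‖C‖ ^ 2 + 1) * D := star_left_conjugate_le_conjugate hC D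
    _ = (‖C‖ ^ 2 + 1) • (star D * D) := by
        rw [Algebra.algebraMap_eq_smul_one, mul_smul_comm, mul_one, smul_mul_assoc]

theorem PosSemidef.re_trace_mul_nonneg {n : Type*} [Fintype n] {ρ P : Matrix n n ℂ}
    (hρ : ρ.PosSemidef) (hP : P.PosSemidef) : 0 ≤ (ρ * P).trace.re := by
  obtain ⟨R, rfl⟩ := CStarAlgebra.nonneg_iff_eq_star_mul_self.mp hρ.nonneg
  rw [mul_assoc, trace_mul_comm]
  exact (Complex.le_def.mp (hP.mul_mul_conjTranspose_same R).trace_nonneg).1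

theorem PosSemidef.re_trace_mul_le_re_trace_mul {n : Type*} [Fintype n] {ρ S T : Matrix n n ℂ}
    (hρ : ρ.PosSemidef) (h : S ≤ T) : (ρ * S).trace.re ≤ (ρ * T).trace.re := by
  have := hρ.re_trace_mul_nonneg (le_iff.mp h)
  rw [mul_sub, trace_sub, Complex.sub_re] at this
  linarith

end Matrix

open Matrix

noncomputable def pureState {n : Type*} [Fintype n] (v : n → ℂ) : Matrix n n ℂ :=
  (star v ⬝ᵥ v)⁻¹ • vecMulVec v (star v)

theorem trace_pureState_mul {n : Type*} [Fintype n] (v : n → ℂ) (S : Matrix n n ℂ) :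
    (pureState v * S).trace = (star v ⬝ᵥ v)⁻¹ * (star v ⬝ᵥ S *ᵥ v) := by
  rw [pureState, smul_mul_assoc, trace_smul, vecMulVec_mul, trace_vecMulVec,
    dotProduct_comm v, dotProduct_mulVec, smul_eq_mul]

theorem isState_pureState {n : ℕ} {v : Fin n → ℂ} (hv : v ≠ 0) : IsState (pureState v) := by
  refine ⟨(posSemidef_vecMulVec_self_star v).smul (inv_nonneg.2 (dotProduct_star_self_nonneg v)),
    ?_⟩
  rw [← mul_one (pureState v), trace_pureState_mul, one_mulVec,
    inv_mul_cancel₀ (dotProduct_star_self_pos_iff.2 hv).ne']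

theorem relEnt_ne_bot {X : Type*} [Fintype X] (p q : X → ℝ) : relEnt p q ≠ ⊥ := by
  unfold relEnt
  split_ifs <;> simp

theorem relEnt_ne_top_iff {X : Type*} [Fintype X] {p q : X → ℝ} :
    relEnt p q ≠ ⊤ ↔ ∀ x, 0 < p x → 0 < q x := by
  unfold relEnt
  split_ifs with h
  · exact iff_of_true (EReal.coe_ne_top _) h
  · exact iff_of_false (not_not.2 rfl) h

theorem relEnt_le_sum_logb {X : Type*} [Fintype X] {p q c : X → ℝ} (hc : ∀ x, 1 ≤ c x)
    (hp₀ : ∀ x, 0 ≤ p x) (hp₁ : ∀ x, p x ≤ 1) (hpq : ∀ x, p x ≤ c x * q x) :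
    relEnt p q ≤ ((∑ x, Real.logb 2 (c x) : ℝ) : EReal) := by
  have hsupp : ∀ x, 0 < p x → 0 < q x := fun x hx =>
    pos_of_mul_pos_right (hx.trans_le (hpq x)) (zero_le_one.trans (hc x))
  unfold relEnt
  rw [if_pos hsupp, EReal.coe_le_coe_iff]
  refine Finset.sum_le_sum fun x _ => ?_
  have hlog : 0 ≤ Real.logb 2 (c x) := Real.logb_nonneg one_lt_two (hc x)
  split_ifs with hx
  · have hratio : p x / q x ≤ c x := (div_le_iff₀ (hsupp x hx)).2 (hpq x)
    calc p x * Real.logb 2 (p x / q x)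
        ≤ p x * Real.logb 2 (c x) := mul_le_mul_of_nonneg_left
          (Real.logb_le_logb_of_le one_lt_two (div_pos hx (hsupp x hx)) hratio) (hp₀ x)
      _ ≤ Real.logb 2 (c x) := mul_le_of_le_one_left hlog (hp₁ x)
  · exact hlog

section Observables

variable {n : ℕ} {X : Type*} [Fintype X] {A M : X → Matrix (Fin n) (Fin n) ℂ}
  {ρ : Matrix (Fin n) (Fin n) ℂ}

theorem probOf_nonneg (hρ : ρ.PosSemidef) (hA : ∀ x, (A x).PosSemidef) (x : X) :
    0 ≤ probOf A ρ x :=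
  hρ.re_trace_mul_nonneg (hA x)

theorem probOf_le_one (hA : IsPOVM A) (hρ : IsState ρ) (x : X) : probOf A ρ x ≤ 1 := by
  have hsum : ∑ x, probOf A ρ x = 1 := by
    simp only [probOf, ← Complex.re_sum, ← trace_sum, ← Finset.mul_sum, hA.2, mul_one, hρ.2,
      Complex.one_re]
  exact hsum ▸ Finset.single_le_sum (fun y _ => probOf_nonneg hρ.1 hA.1 y) (Finset.mem_univ x)

theorem mulVec_eq_zero_of_forall_relEnt_ne_top (hA : ∀ x, (A x).PosSemidef)
    (h : ∀ ρ, IsState ρ → relEnt (probOf A ρ) (probOf M ρ) ≠ ⊤) (x : X) (v : Fin n → ℂ)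
    (hv : M x *ᵥ v = 0) : A x *ᵥ v = 0 := by
  by_contra hAv
  have hv₀ : v ≠ 0 := by
    rintro rfl
    exact hAv (mulVec_zero _)
  have hpos : 0 < (star v ⬝ᵥ v)⁻¹ * (star v ⬝ᵥ A x *ᵥ v) :=
    mul_pos (inv_pos.2 (dotProduct_star_self_pos_iff.2 hv₀)) <|
      ((hA x).dotProduct_mulVec_nonneg v).lt_of_ne
        (Ne.symm (mt ((hA x).dotProduct_mulVec_zero_iff v).1 hAv))
  have hq := relEnt_ne_top_iff.mp (h _ (isState_pureState hv₀)) x <| by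
    rw [probOf, trace_pureState_mul]
    exact (Complex.lt_def.mp hpos).1
  rw [probOf, trace_pureState_mul, hv, dotProduct_zero, mul_zero] at hq
  exact hq.false

theorem exists_forall_relEnt_le_of_mulVec_eq_zero (hA : IsPOVM A)
    (hM : ∀ x, (M x).PosSemidef) (h : ∀ x v, M x *ᵥ v = 0 → A x *ᵥ v = 0) :
    ∃ C : ℝ, ∀ ρ, IsState ρ → relEnt (probOf A ρ) (probOf M ρ) ≤ C := by
  choose c hc₁ hc using fun x => (hA.1 x).exists_le_smul_of_mulVec_eq_zero (hM x) (h x)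
  refine ⟨∑ x, Real.logb 2 (c x), fun ρ hρ =>
    relEnt_le_sum_logb hc₁ (probOf_nonneg hρ.1 hA.1) (probOf_le_one hA hρ) fun x => ?_⟩
  calc probOf A ρ x ≤ (ρ * (c x • M x)).trace.re := hρ.1.re_trace_mul_le_re_trace_mul (hc x)
    _ = c x * probOf M ρ x := by simp [probOf, trace_smul]

end Observables

theorem stmt5_general {n : ℕ} {X Y : Type*} [Fintype X] [Fintype Y]
    (A : X → Matrix (Fin n) (Fin n) ℂ) (B : Y → Matrix (Fin n) (Fin n) ℂ)
    (M : X → Y → Matrix (Fin n) (Fin n) ℂ)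
    (hA : IsPOVM A) (hB : IsPOVM B)
    (hM : IsPOVM (fun xy : X × Y => M xy.1 xy.2)) :
    (⨆ ρ : {ρ : Matrix (Fin n) (Fin n) ℂ // IsState ρ},
        relEnt (probOf A ρ.1) (probOf (fun x => ∑ y, M x y) ρ.1) +
          relEnt (probOf B ρ.1) (probOf (fun y => ∑ x, M x y) ρ.1)) ≠ ⊤ ↔
      (∀ x, ∀ v : Fin n → ℂ, (∑ y, M x y).mulVec v = 0 → (A x).mulVec v = 0) ∧
        (∀ y, ∀ v : Fin n → ℂ, (∑ x, M x y).mulVec v = 0 → (B y).mulVec v = 0) := by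
  have hM₁ : ∀ x, (∑ y, M x y).PosSemidef := fun x => posSemidef_sum _ fun y _ => hM.1 (x, y)
  have hM₂ : ∀ y, (∑ x, M x y).PosSemidef := fun y => posSemidef_sum _ fun x _ => hM.1 (x, y)
  constructor
  · intro h
    have hfin := fun ρ (hρ : IsState ρ) =>
      (EReal.add_ne_top_iff_ne_top₂ (relEnt_ne_bot _ _) (relEnt_ne_bot _ _)).1 <|
        ne_top_of_le_ne_top h (le_iSup_of_le ⟨ρ, hρ⟩ le_rfl)
    exact ⟨mulVec_eq_zero_of_forall_relEnt_ne_top hA.1 fun ρ hρ => (hfin ρ hρ).1,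
      mulVec_eq_zero_of_forall_relEnt_ne_top hB.1 fun ρ hρ => (hfin ρ hρ).2⟩
  · rintro ⟨h₁, h₂⟩
    obtain ⟨C₁, hC₁⟩ := exists_forall_relEnt_le_of_mulVec_eq_zero hA hM₁ h₁
    obtain ⟨C₂, hC₂⟩ := exists_forall_relEnt_le_of_mulVec_eq_zero hB hM₂ h₂
    refine ne_top_of_le_ne_top (EReal.coe_ne_top (C₁ + C₂)) (iSup_le fun ρ => ?_)
    rw [EReal.coe_add]
    exact add_le_add (hC₁ ρ.1 ρ.2) (hC₂ ρ.1 ρ.2)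

/-- The entropic divergence `D(A,B‖M) = sup_ρ [S(A^ρ‖M₁^ρ) + S(B^ρ‖M₂^ρ)]` is
finite iff `ker M₁(x) ⊆ ker A(x)` for all `x` and `ker M₂(y) ⊆ ker B(y)` for
all `y`. -/
theorem stmt5 {n : ℕ} [NeZero n] {X Y : Type*} [Fintype X] [Fintype Y]
    (A : X → Matrix (Fin n) (Fin n) ℂ) (B : Y → Matrix (Fin n) (Fin n) ℂ)
    (M : X → Y → Matrix (Fin n) (Fin n) ℂ)
    (hA : IsPOVM A) (hB : IsPOVM B)
    (hM : IsPOVM (fun xy : X × Y => M xy.1 xy.2)) :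
    (⨆ ρ : {ρ : Matrix (Fin n) (Fin n) ℂ // IsState ρ},
        relEnt (probOf A ρ.1) (probOf (fun x => ∑ y, M x y) ρ.1) +
          relEnt (probOf B ρ.1) (probOf (fun y => ∑ x, M x y) ρ.1)) ≠ ⊤ ↔
      (∀ x, ∀ v : Fin n → ℂ, (∑ y, M x y).mulVec v = 0 → (A x).mulVec v = 0) ∧
        (∀ y, ∀ v : Fin n → ℂ, (∑ x, M x y).mulVec v = 0 → (B y).mulVec v = 0) :=
  stmt5_general A B M hA hB hM
end

section
/- For the two orthogonal spin-1/2 components X(x) = (1/2)(I + xσ₁) and Y(y) = (1/2)(I + yσ₂), the bi-observable M₀(x,y) = (1/4)(I + (x/√2)σ₁ + (y/√2)σ₂) is a POVM on {−1,+1}² whose marginals are M₀₁(x) = (1/2)(I + (x/√2)σ₁) and M₀₂(y) = (1/2)(I + (y/√2)σ₂), and each M₀(x,y) is a rank-one positive operator. -/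
open scoped BigOperators Classical ComplexOrder

/-- The first Pauli matrix. -/
def pauli1 : Matrix (Fin 2) (Fin 2) ℂ := !![0, 1; 1, 0]
/-- The second Pauli matrix. -/
def pauli2 : Matrix (Fin 2) (Fin 2) ℂ := !![0, -Complex.I; Complex.I, 0]
/-- The third Pauli matrix. -/
def pauli3 : Matrix (Fin 2) (Fin 2) ℂ := !![1, 0; 0, -1]

/-- The outcomes `+1, −1` encoded by booleans. -/
def sg (b : Bool) : ℝ := if b then 1 else -1

/-!
`M₀(x,y)` is one quarter of `I + a σ₁ + b σ₂` with `(a, b) = (x, y)/√2` a unit vector, and for a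
unit vector `I + a σ₁ + b σ₂` is the outer product `v v*` of the spinor `v = (1, a + i b)`.
Hence `M₀(x,y)` is positive of rank one; the marginal and normalisation identities hold because
`sg true + sg false = 0`.
-/

open Matrix Complex

theorem Matrix.rank_pos_of_ne_zero {m n K : Type*} [Fintype m] [Fintype n] [DecidableEq n]
    [Field K] {A : Matrix m n K} (hA : A ≠ 0) : 0 < A.rank := by
  rw [pos_iff_ne_zero, rank, Ne, Submodule.finrank_eq_zero, LinearMap.range_eq_bot,
    ← toLin'_apply', map_eq_zero_iff _ toLin'.injective]
  exact hA

theorem Matrix.rank_vecMulVec_eq_one {n K : Type*} [Fintype n] [DecidableEq n] [Field K]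
    {w v : n → K} (hw : w ≠ 0) (hv : v ≠ 0) : (vecMulVec w v).rank = 1 :=
  (rank_vecMulVec_le w v).antisymm (rank_pos_of_ne_zero (vecMulVec_ne_zero hw hv))

theorem one_add_smul_pauli1_add_smul_pauli2_eq_vecMulVec {a b : ℝ} (hab : a ^ 2 + b ^ 2 = 1) :
    (1 : Matrix (Fin 2) (Fin 2) ℂ) + a • pauli1 + b • pauli2 =
      vecMulVec ![1, a + b * I] (star ![1, a + b * I]) := by
  have hab' : (a : ℂ) ^ 2 + (b : ℂ) ^ 2 = 1 := by exact_mod_cast hab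
  ext i j
  fin_cases i <;> fin_cases j <;> simp [pauli1, pauli2, vecMulVec_apply]
  linear_combination -hab' + (b : ℂ) ^ 2 * I_sq

section

variable {r a b : ℝ}

theorem posSemidef_smul_one_add_smul_pauli1_add_smul_pauli2 (hr : 0 ≤ r)
    (hab : a ^ 2 + b ^ 2 = 1) :
    (r • ((1 : Matrix (Fin 2) (Fin 2) ℂ) + a • pauli1 + b • pauli2)).PosSemidef := by
  rw [one_add_smul_pauli1_add_smul_pauli2_eq_vecMulVec hab]
  exact (posSemidef_vecMulVec_self_star _).smul hr

theorem rank_smul_one_add_smul_pauli1_add_smul_pauli2 (hr : r ≠ 0) (hab : a ^ 2 + b ^ 2 = 1) :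
    (r • ((1 : Matrix (Fin 2) (Fin 2) ℂ) + a • pauli1 + b • pauli2)).rank = 1 := by
  have hv : (![1, a + b * I] : Fin 2 → ℂ) ≠ 0 := fun h => one_ne_zero (congrFun h 0)
  rw [← coe_smul, rank_smul_of_mem_nonZeroDivisors _ (mem_nonZeroDivisors_of_ne_zero
    (ofReal_ne_zero.mpr hr)), one_add_smul_pauli1_add_smul_pauli2_eq_vecMulVec hab]
  exact rank_vecMulVec_eq_one hv (star_ne_zero.mpr hv)

end

theorem sg_div_sqrt_two_sq_add_sq (b b' : Bool) :
    (sg b / Real.sqrt 2) ^ 2 + (sg b' / Real.sqrt 2) ^ 2 = 1 := by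
  have hsg (c : Bool) : sg c ^ 2 = 1 := by cases c <;> norm_num [sg]
  rw [div_pow, div_pow, hsg, hsg, Real.sq_sqrt zero_le_two]
  norm_num

/-- For the orthogonal spin-1/2 components `X(x) = (1/2)(I+xσ₁)` and
`Y(y) = (1/2)(I+yσ₂)`, the bi-observable
`M₀(x,y) = (1/4)(I + (x/√2)σ₁ + (y/√2)σ₂)` is a POVM on `{−1,+1}²` with
marginals `M₀₁(x) = (1/2)(I + (x/√2)σ₁)` and `M₀₂(y) = (1/2)(I + (y/√2)σ₂)`,
and each `M₀(x,y)` is a rank-one positive operator. -/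
theorem stmt16
    (M₀ : Bool → Bool → Matrix (Fin 2) (Fin 2) ℂ)
    (hM₀ : ∀ b b', M₀ b b' =
      ((1 : ℝ)/4) •
        ((1 : Matrix (Fin 2) (Fin 2) ℂ) +
          (sg b / Real.sqrt 2) • pauli1 + (sg b' / Real.sqrt 2) • pauli2)) :
    (∀ b b', (M₀ b b').PosSemidef) ∧
      (∑ b : Bool, ∑ b' : Bool, M₀ b b') = 1 ∧
      (∀ b, ∑ b' : Bool, M₀ b b' =
        ((1 : ℝ)/2) •
          ((1 : Matrix (Fin 2) (Fin 2) ℂ) + (sg b / Real.sqrt 2) • pauli1)) ∧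
      (∀ b', ∑ b : Bool, M₀ b b' =
        ((1 : ℝ)/2) •
          ((1 : Matrix (Fin 2) (Fin 2) ℂ) + (sg b' / Real.sqrt 2) • pauli2)) ∧
      (∀ b b', (M₀ b b').rank = 1) := by
  have hsg_true : sg true = 1 := rfl
  have hsg_false : sg false = -1 := rfl
  refine ⟨fun b b' => ?_, ?_, fun b => ?_, fun b' => ?_, fun b b' => ?_⟩
  · rw [hM₀]
    exact posSemidef_smul_one_add_smul_pauli1_add_smul_pauli2 (by norm_num)
      (sg_div_sqrt_two_sq_add_sq b b')
  · simp only [Fintype.sum_bool, hM₀, hsg_true, hsg_false]; module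
  · simp only [Fintype.sum_bool, hM₀, hsg_true, hsg_false]; module
  · simp only [Fintype.sum_bool, hM₀, hsg_true, hsg_false]; module
  · rw [hM₀]
    exact rank_smul_one_add_smul_pauli1_add_smul_pauli2 (by norm_num)
      (sg_div_sqrt_two_sq_add_sq b b')
end
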